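/- arXiv:1409.4786 — 4 statements merged into one kernel-verified Lean document; each statement's English description precedes it below -/
import Mathlib

section
/- There exists a unique real number x₀ such that f(x₀) = 0, where f(x) = σ₁|E − Kx|^{p−2}(E − Kx) − σ₂(E − Kx) − σ₂x. -/
/-!
Write `φ(t) = |t|^(p-2) t`. Since `E - K x` and `x` add up to `E + (1 - K) x`, the function is
`f(x) = σ₁ φ(E - K x) - σ₂ E - σ₂ (1 - K) x`: the first term is antitone in `x` because `φ` is
increasing and `K ≥ 0`, and the last one is strictly decreasing with slope `σ₂ (1 - K) > 0`.
So `f` is continuous, strictly decreasing and eventually of either sign, and has exactly one root.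
-/

open Set

theorem existsUnique_eq_zero_of_antitone_add_mul {f : ℝ → ℝ} {b : ℝ} (hb : 0 < b)
    (hf : Continuous f) (hanti : Antitone fun x => f x + b * x) : ∃! x, f x = 0 := by
  have hf_anti : StrictAnti f := fun x y hxy => by
    have := hanti hxy.le
    nlinarith
  -- Antitonicity of `f x + b x` between `0` and `f 0 / b` gives `f (f 0 / b)` the sign of `-f 0`.
  set x₁ := f 0 / b
  have hbx₁ : b * x₁ = f 0 := mul_div_cancel₀ _ hb.ne'
  have hsign : 0 ∈ uIcc (f 0) (f x₁) := by
    rcases le_total 0 (f 0) with h0 | h0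
    · have hx₁ : 0 ≤ x₁ := div_nonneg h0 hb.le
      have := hanti hx₁
      exact mem_uIcc.2 (Or.inr ⟨by linarith, h0⟩)
    · have hx₁ : x₁ ≤ 0 := div_nonpos_of_nonpos_of_nonneg h0 hb.le
      have := hanti hx₁
      exact mem_uIcc.2 (Or.inl ⟨h0, by linarith⟩)
  obtain ⟨x₀, -, hx₀⟩ := intermediate_value_uIcc hf.continuousOn hsign
  exact ⟨x₀, hx₀, fun y hy => hf_anti.injective (hy.trans hx₀.symm)⟩

section SignedPower

variable {p : ℝ}

theorem abs_rpow_sub_two_mul_of_nonneg (hp : 1 < p) {t : ℝ} (ht : 0 ≤ t) :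
    |t| ^ (p - 2) * t = t ^ (p - 1) := by
  rcases ht.eq_or_lt with rfl | ht
  · simp [Real.zero_rpow (by linarith : p - 1 ≠ 0)]
  · rw [abs_of_pos ht, show p - 1 = p - 2 + 1 by ring, Real.rpow_add_one ht.ne']

theorem abs_abs_rpow_sub_two_mul (hp : 1 < p) (t : ℝ) :
    |(|t| ^ (p - 2) * t)| = |t| ^ (p - 1) := by
  have h := abs_rpow_sub_two_mul_of_nonneg hp (abs_nonneg t)
  rw [abs_abs] at h
  rwa [abs_mul, abs_of_nonneg (Real.rpow_nonneg (abs_nonneg t) _)]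

theorem strictMono_abs_rpow_sub_two_mul (hp : 1 < p) :
    StrictMono fun t : ℝ => |t| ^ (p - 2) * t := by
  refine strictMono_of_odd_strictMonoOn_nonneg (fun t => by simp only [abs_neg, mul_neg]) ?_
  refine (Real.strictMonoOn_rpow_Ici_of_exponent_pos (by linarith : 0 < p - 1)).congr ?_
  exact fun t ht => (abs_rpow_sub_two_mul_of_nonneg hp ht).symm

theorem continuous_abs_rpow_sub_two_mul (hp : 1 < p) :
    Continuous fun t : ℝ => |t| ^ (p - 2) * t := by
  refine continuous_iff_continuousAt.2 fun x => ?_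
  rcases eq_or_ne x 0 with rfl | hx
  · -- `p - 2` may be negative, so at the origin continuity comes from `|φ t| = |t|^(p-1)`.
    have hlim : Filter.Tendsto (fun t : ℝ => |t| ^ (p - 1)) (nhds 0) (nhds 0) := by
      have := ((Real.continuous_rpow_const (by linarith : 0 ≤ p - 1)).comp continuous_abs).tendsto 0
      simpa [Function.comp_def, Real.zero_rpow (by linarith : p - 1 ≠ 0)] using this
    simpa [ContinuousAt] using
      squeeze_zero_norm (fun t => (abs_abs_rpow_sub_two_mul hp t).le) hlim
  · exact ((Real.continuousAt_rpow_const _ _ (Or.inl (abs_ne_zero.2 hx))).comp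
      continuous_abs.continuousAt).mul continuousAt_id

end SignedPower

/-- With `σ₁ > σ₂ > 0`, `p > 1`, `E ∈ ℝ`, `0 < K < 1`, the equation
`f(x₀) = 0` with `f(x) = σ₁ |E − Kx|^(p−2) (E − Kx) − σ₂ (E − Kx) − σ₂ x`
has a unique real solution `x₀`. -/
theorem f_existsUnique_root (σ₁ σ₂ p E K : ℝ) (h₁₂ : σ₁ > σ₂) (h₂ : σ₂ > 0) (hp : p > 1)
    (hK₀ : 0 < K) (hK₁ : K < 1) :
    ∃! x₀ : ℝ,
      σ₁ * |E - K * x₀| ^ (p - 2) * (E - K * x₀) - σ₂ * (E - K * x₀) - σ₂ * x₀ = 0 := by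
  set φ : ℝ → ℝ := fun t => |t| ^ (p - 2) * t
  have hf : ∀ x, σ₁ * |E - K * x| ^ (p - 2) * (E - K * x) - σ₂ * (E - K * x) - σ₂ * x
      = σ₁ * φ (E - K * x) - σ₂ * E - σ₂ * (1 - K) * x := fun x => by
    simp only [φ]; ring
  have hφ_anti : Antitone fun x => φ (E - K * x) :=
    (strictMono_abs_rpow_sub_two_mul hp).monotone.comp_antitone fun x y hxy => by nlinarith
  have hφ_cont := continuous_abs_rpow_sub_two_mul hp
  simp only [hf]
  refine existsUnique_eq_zero_of_antitone_add_mul (mul_pos h₂ (sub_pos.2 hK₁)) (by fun_prop) ?_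
  convert (hφ_anti.const_mul (by linarith : 0 ≤ σ₁)).add_const (-(σ₂ * E)) using 2
  ring
end

section
/- For every triple of positive reals l₁, l₂, l₃, the depolarization factors sum to unity: d₁(l₁,l₂,l₃) + d₂(l₁,l₂,l₃) + d₃(l₁,l₂,l₃) = 1. -/
open MeasureTheory

/-- The depolarization factor in direction `j` of an ellipsoid with semi-axis lengths
`l 0, l 1, l 2`:
`d_j(l₁,l₂,l₃) = (l₁l₂l₃/2) ∫₀^∞ dy / ((l_j² + y) √((l₁² + y)(l₂² + y)(l₃² + y)))`. -/
noncomputable def depol (j : Fin 3) (l : Fin 3 → ℝ) : ℝ :=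
  (l 0 * l 1 * l 2) / 2 *
    ∫ y in Set.Ioi (0 : ℝ),
      1 / ((l j ^ 2 + y) * Real.sqrt ((l 0 ^ 2 + y) * (l 1 ^ 2 + y) * (l 2 ^ 2 + y)))

/-!
With `P(y) = ∏ᵢ (aᵢ + y)`, the logarithmic derivative of `P` is `∑ᵢ 1 / (aᵢ + y)`, so the sum
of the integrands `1 / ((aᵢ + y) √P(y))` is the derivative of `-2 / √P(y)`. This antiderivative
vanishes at infinity, hence the integrals sum to `2 / √P(0) = 2 / √(∏ᵢ aᵢ)`. For `aᵢ = lᵢ²` this is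
`2 / (l₁l₂l₃)`, which the prefactor `l₁l₂l₃ / 2` turns into `1`.
-/

open Filter Finset Real Set Topology

theorem HasDerivAt.neg_two_div_sqrt {f : ℝ → ℝ} {f' x : ℝ} (hf : HasDerivAt f f' x)
    (hx : 0 < f x) : HasDerivAt (fun y => -2 / √(f y)) (f' / (f x * √(f x))) x := by
  have hsqrt : 0 < √(f x) := sqrt_pos.2 hx
  refine ((hasDerivAt_const x (-2 : ℝ)).div (hf.sqrt hx.ne') hsqrt.ne').congr_deriv ?_
  rw [sq_sqrt hx.le]
  field_simp
  ring

section ProdAdd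

variable {ι : Type*} (s : Finset ι) (a : ι → ℝ)

theorem hasDerivAt_prod_add [DecidableEq ι] (y : ℝ) :
    HasDerivAt (fun y => ∏ i ∈ s, (a i + y)) (∑ i ∈ s, ∏ j ∈ s.erase i, (a j + y)) y := by
  simpa using HasDerivAt.fun_finsetProd (u := s) fun i _ => (hasDerivAt_id y).const_add (a i)

theorem hasDerivAt_neg_two_div_sqrt_prod_add {y : ℝ} (hy : ∀ i ∈ s, 0 < a i + y) :
    HasDerivAt (fun y => -2 / √(∏ i ∈ s, (a i + y)))
      (∑ i ∈ s, 1 / ((a i + y) * √(∏ j ∈ s, (a j + y)))) y := by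
  classical
  convert (hasDerivAt_prod_add s a y).neg_two_div_sqrt (prod_pos hy) using 1
  rw [sum_div]
  refine sum_congr rfl fun i hi => ?_
  have herase : 0 < ∏ j ∈ s.erase i, (a j + y) := prod_pos fun j hj => hy j (mem_of_mem_erase hj)
  rw [← mul_prod_erase s _ hi]
  field_simp

theorem tendsto_prod_add_atTop (hs : s.Nonempty) (ha : ∀ i ∈ s, 0 ≤ a i) :
    Tendsto (fun y => ∏ i ∈ s, (a i + y)) atTop atTop := by
  refine tendsto_atTop_mono' _ ?_ (tendsto_pow_atTop hs.card_pos.ne')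
  filter_upwards [eventually_ge_atTop 0] with y hy
  rw [← prod_const]
  exact prod_le_prod (fun _ _ => hy) fun i hi => le_add_of_nonneg_left (ha i hi)

theorem sum_integral_Ioi_inv_mul_sqrt_prod_add (hs : s.Nonempty) (ha : ∀ i ∈ s, 0 < a i) :
    ∑ i ∈ s, ∫ y in Ioi 0, 1 / ((a i + y) * √(∏ j ∈ s, (a j + y))) = 2 / √(∏ i ∈ s, a i) := by
  set F : ι → ℝ → ℝ := fun i y => 1 / ((a i + y) * √(∏ j ∈ s, (a j + y)))
  have hpos : ∀ y ∈ Ici (0 : ℝ), ∀ i ∈ s, 0 < a i + y := fun y hy i hi =>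
    add_pos_of_pos_of_nonneg (ha i hi) hy
  have hderiv : ∀ y ∈ Ici (0 : ℝ), HasDerivAt (fun y => -2 / √(∏ i ∈ s, (a i + y)))
      (∑ i ∈ s, F i y) y := fun y hy => hasDerivAt_neg_two_div_sqrt_prod_add s a (hpos y hy)
  have hF_nonneg : ∀ y ∈ Ioi (0 : ℝ), ∀ i ∈ s, 0 ≤ F i y := fun y hy i hi => by
    have := hpos y (mem_Ici_of_Ioi hy) i hi
    positivity
  have hlim : Tendsto (fun y => -2 / √(∏ i ∈ s, (a i + y))) atTop (𝓝 0) :=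
    tendsto_const_nhds.div_atTop
      (tendsto_sqrt_atTop.comp (tendsto_prod_add_atTop s a hs fun i hi => (ha i hi).le))
  have hint : IntegrableOn (fun y => ∑ i ∈ s, F i y) (Ioi 0) :=
    integrableOn_Ioi_deriv_of_nonneg' hderiv (fun y hy => sum_nonneg (hF_nonneg y hy)) hlim
  have hF_int : ∀ i ∈ s, IntegrableOn (F i) (Ioi 0) := by
    intro i hi
    refine hint.mono' ?_ ((ae_restrict_iff' measurableSet_Ioi).2 (.of_forall fun y hy => ?_))
    · exact (by fun_prop : Measurable (F i)).aestronglyMeasurable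
    · rw [norm_of_nonneg (hF_nonneg y hy i hi)]
      exact single_le_sum (hF_nonneg y hy) hi
  rw [← integral_finsetSum s hF_int, integral_Ioi_of_hasDerivAt_of_nonneg' hderiv
    (fun y hy => sum_nonneg (hF_nonneg y hy)) hlim]
  simp [neg_div]

end ProdAdd

/-- For every triple of positive reals `l₁, l₂, l₃` the depolarization
factors sum to unity: `d₁ + d₂ + d₃ = 1`. -/
theorem depol_sum_eq_one (l : Fin 3 → ℝ) (hl : ∀ j, 0 < l j) :
    depol 0 l + depol 1 l + depol 2 l = 1 := by
  have hprod : 0 < l 0 * l 1 * l 2 := mul_pos (mul_pos (hl 0) (hl 1)) (hl 2)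
  have hsum := sum_integral_Ioi_inv_mul_sqrt_prod_add univ (fun j => l j ^ 2) univ_nonempty
    fun j _ => pow_pos (hl j) 2
  simp only [Fin.sum_univ_three, Fin.prod_univ_three, ← mul_pow, sqrt_sq hprod.le] at hsum
  rw [depol, depol, depol, ← mul_add, ← mul_add, hsum, div_mul_div_comm, mul_comm 2,
    div_self (mul_ne_zero hprod.ne' two_ne_zero)]
end

section
/- The integral over the coating satisfies ∫_{ρ_c}^{ρ_e} dρ / ((c₁² + ρ)^{3/2}(c₂² + ρ)^{1/2}(c₃² + ρ)^{1/2}) = 2d_{c1}/g(ρ_c) − 2d_{e1}/g(ρ_e), where d_{c1} = d₁(l_{c1},l_{c2},l_{c3}) and d_{e1} = d₁(l_{e1},l_{e2},l_{e3}). -/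
open MeasureTheory

/-!
Substituting `t = y + ρ` in the integral defining `d₁` for the semi-axes `√(c_j² + ρ)` turns
`2 d₁ / g(ρ)` into the tail `∫_ρ^∞` of the coating integrand. The coating integral is the
difference of the tails at `ρ_c` and `ρ_e`, both finite because the integrand decays like `t^(-5/2)`.
-/

open Set

section Translation

variable {E : Type*} [NormedAddCommGroup E]

theorem setIntegral_Ioi_comp_add_right [NormedSpace ℝ E] (f : ℝ → E) (a d : ℝ) :
    ∫ x in Ioi a, f (x + d) = ∫ x in Ioi (a + d), f x := by
  simpa [preimage_add_const_Ioi] using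
    (measurePreserving_add_right volume d).setIntegral_preimage_emb
    (measurableEmbedding_addRight d) f (Ioi (a + d))

theorem integrableOn_Ioi_comp_add_right_iff (f : ℝ → E) (a d : ℝ) :
    IntegrableOn (fun x => f (x + d)) (Ioi a) ↔ IntegrableOn f (Ioi (a + d)) := by
  simpa [Function.comp_def, preimage_add_const_Ioi] using
    (measurePreserving_add_right volume d).integrableOn_comp_preimage
    (measurableEmbedding_addRight d) (f := f) (s := Ioi (a + d))

end Translation

/-- The integrand of `depol j l` in terms of the squared semi-axes `a i = l i ^ 2`. -/
noncomputable def depolKernel (j : Fin 3) (a : Fin 3 → ℝ) (t : ℝ) : ℝ :=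
  1 / ((a j + t) * Real.sqrt ((a 0 + t) * (a 1 + t) * (a 2 + t)))

namespace depolKernel

variable (j : Fin 3) (a : Fin 3 → ℝ)

theorem add_const (ρ y : ℝ) : depolKernel j (fun i => a i + ρ) y = depolKernel j a (y + ρ) := by
  simp only [depolKernel, add_comm y, add_assoc]

theorem zero_eq_rpow {t : ℝ} (h₀ : 0 < a 0 + t) (h₁ : 0 ≤ a 1 + t) :
    depolKernel 0 a t =
      1 / ((a 0 + t) ^ (3 / 2 : ℝ) * (a 1 + t) ^ (1 / 2 : ℝ) * (a 2 + t) ^ (1 / 2 : ℝ)) := by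
  rw [depolKernel, Real.sqrt_mul (mul_nonneg h₀.le h₁), Real.sqrt_mul h₀.le,
    Real.sqrt_eq_rpow, Real.sqrt_eq_rpow, Real.sqrt_eq_rpow,
    show (3 / 2 : ℝ) = 1 + 1 / 2 by norm_num, Real.rpow_add h₀, Real.rpow_one]
  ring

theorem nonneg {t : ℝ} (h : 0 ≤ a j + t) : 0 ≤ depolKernel j a t :=
  div_nonneg zero_le_one (mul_nonneg h (Real.sqrt_nonneg _))

theorem const_eq_rpow {m t : ℝ} (h : 0 < m + t) :
    depolKernel j (fun _ => m) t = (t + m) ^ (-(5 / 2 : ℝ)) := by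
  have h52 : (m + t) ^ (5 / 2 : ℝ) = (m + t) * (m + t) * Real.sqrt (m + t) := by
    rw [Real.sqrt_eq_rpow, show (5 / 2 : ℝ) = 1 + (1 + 1 / 2) by norm_num, Real.rpow_add h,
      Real.rpow_add h, Real.rpow_one]
    ring
  rw [depolKernel, add_comm t, Real.rpow_neg h.le, ← one_div, h52,
    Real.sqrt_mul (mul_self_nonneg _), Real.sqrt_mul_self h.le]
  ring

theorem le_const {m t : ℝ} (hm : ∀ i, m ≤ a i) (h : 0 < m + t) :
    depolKernel j a t ≤ depolKernel j (fun _ => m) t := by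
  have hpos : ∀ i, 0 ≤ a i + t := fun i => by linarith [hm i]
  unfold depolKernel
  gcongr <;> first | exact hm _ | exact hpos _ | exact mul_nonneg (hpos 0) (hpos 1)

theorem integrableOn_Ioi {ρ : ℝ} (ha : ∀ i, 0 < a i + ρ) :
    IntegrableOn (depolKernel j a) (Ioi ρ) := by
  obtain ⟨i₀, hi₀⟩ := Finite.exists_min a
  have hmaj : IntegrableOn (fun t => (t + a i₀) ^ (-(5 / 2 : ℝ))) (Ioi ρ) :=
    (integrableOn_Ioi_comp_add_right_iff (fun x => x ^ (-(5 / 2 : ℝ))) ρ (a i₀)).mpr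
      (integrableOn_Ioi_rpow_of_lt (by norm_num) (by linarith [ha i₀]))
  refine hmaj.mono' (by unfold depolKernel; fun_prop : Measurable _).aestronglyMeasurable ?_
  filter_upwards [ae_restrict_mem measurableSet_Ioi] with t (ht : ρ < t)
  have hpos : 0 < a i₀ + t := by linarith [ha i₀]
  rw [Real.norm_of_nonneg (nonneg j a (by linarith [hi₀ j])), ← const_eq_rpow j hpos]
  exact le_const j a hi₀ hpos

end depolKernel

theorem depol_sqrt_add (j : Fin 3) (a : Fin 3 → ℝ) {ρ : ℝ} (ha : ∀ i, 0 ≤ a i + ρ) :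
    depol j (fun i => √(a i + ρ)) =
      √((a 0 + ρ) * (a 1 + ρ) * (a 2 + ρ)) / 2 * ∫ t in Ioi ρ, depolKernel j a t := by
  have hsq : ∀ i, √(a i + ρ) ^ 2 = a i + ρ := fun i => Real.sq_sqrt (ha i)
  have hshift : ∫ t in Ioi ρ, depolKernel j a t =
      ∫ y in Ioi 0, depolKernel j (fun i => a i + ρ) y := by
    simp only [depolKernel.add_const, setIntegral_Ioi_comp_add_right, zero_add]
  rw [hshift, Real.sqrt_mul (mul_nonneg (ha 0) (ha 1)), Real.sqrt_mul (ha 0)]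
  simp only [depol, depolKernel, hsq]

/-- Fix positive `c₁, c₂, c₃` and `0 ≤ ρ_c < ρ_e`; let
`g(t) = √((c₁²+t)(c₂²+t)(c₃²+t))`, `l_{cj} = √(c_j²+ρ_c)`, `l_{ej} = √(c_j²+ρ_e)`.  Then
`∫_{ρ_c}^{ρ_e} dρ/((c₁²+ρ)^{3/2}(c₂²+ρ)^{1/2}(c₃²+ρ)^{1/2}) = 2 d_{c1}/g(ρ_c) − 2 d_{e1}/g(ρ_e)`,
where `d_{c1} = d₁(l_{c1},l_{c2},l_{c3})` and `d_{e1} = d₁(l_{e1},l_{e2},l_{e3})`. -/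
theorem coating_integral_eq (c : Fin 3 → ℝ) (hc : ∀ j, 0 < c j)
    (ρc ρe : ℝ) (hρc : 0 ≤ ρc) (hρ : ρc < ρe)
    (g : ℝ → ℝ) (hg : ∀ t, g t = Real.sqrt ((c 0 ^ 2 + t) * (c 1 ^ 2 + t) * (c 2 ^ 2 + t)))
    (lc le : Fin 3 → ℝ)
    (hlc : ∀ j, lc j = Real.sqrt (c j ^ 2 + ρc))
    (hle : ∀ j, le j = Real.sqrt (c j ^ 2 + ρe)) :
    (∫ ρ in ρc..ρe,
        1 / ((c 0 ^ 2 + ρ) ^ ((3 : ℝ) / 2) * (c 1 ^ 2 + ρ) ^ ((1 : ℝ) / 2)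
          * (c 2 ^ 2 + ρ) ^ ((1 : ℝ) / 2)))
      = 2 * depol 0 lc / g ρc - 2 * depol 0 le / g ρe := by
  set a : Fin 3 → ℝ := fun i => c i ^ 2
  have ha : ∀ ρ, 0 ≤ ρ → ∀ i, 0 < a i + ρ := fun ρ hρ i => by have := hc i; positivity
  have hdepol : ∀ ρ, 0 ≤ ρ → ∀ l : Fin 3 → ℝ, (∀ j, l j = √(c j ^ 2 + ρ)) →
      2 * depol 0 l / g ρ = ∫ t in Ioi ρ, depolKernel 0 a t := by
    intro ρ hρ l hl
    have hg_pos : 0 < g ρ := by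
      rw [hg]; exact Real.sqrt_pos.mpr (mul_pos (mul_pos (ha ρ hρ 0) (ha ρ hρ 1)) (ha ρ hρ 2))
    rw [funext hl, depol_sqrt_add 0 a fun i => (ha ρ hρ i).le, ← hg]
    field_simp
  rw [hdepol ρc hρc lc hlc, hdepol ρe (hρc.trans hρ.le) le hle,
    intervalIntegral.integral_Ioi_sub_Ioi (depolKernel.integrableOn_Ioi 0 a (ha ρc hρc)) hρ.le]
  refine intervalIntegral.integral_congr fun t ht => ?_
  have ht₀ : 0 ≤ t := hρc.trans (uIcc_of_le hρ.le ▸ ht).1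
  exact (depolKernel.zero_eq_rpow a (ha t ht₀ 0) (ha t ht₀ 1).le).symm
end

section
/- Positivity of K: with θ₁ = g(ρ_c)/g(ρ_e), for each j ∈ {1,2,3} one has d_j(l_{c1},l_{c2},l_{c3}) − θ₁ d_j(l_{e1},l_{e2},l_{e3}) > 0; in particular K = d_{c1} − θ₁d_{e1} > 0. -/
/-!
With `l_i = √(c_i² + ρ)` the substitution `t = ρ + y` turns `d_j(l)` into `g(ρ)/2 · ∫_ρ^∞ F`
for an integrand `F` that does not depend on `ρ`; `F(t) = O(t⁻²)` keeps these tails finite.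
Hence `d_j(l_c) − θ₁ d_j(l_e) = g(ρ_c)/2 · (∫_{ρ_c}^∞ F − ∫_{ρ_e}^∞ F)`, which is
`g(ρ_c)/2 · ∫_{ρ_c}^{ρ_e} F > 0`.
-/

open MeasureTheory

open Set Real

theorem setIntegral_Ioi_zero_comp_const_add {E : Type*} [NormedAddCommGroup E] [NormedSpace ℝ E]
    (f : ℝ → E) (a : ℝ) : ∫ y in Ioi 0, f (a + y) = ∫ t in Ioi a, f t := by
  have := (measurePreserving_add_left volume a).setIntegral_preimage_emb
    (measurableEmbedding_addLeft a) f (Ioi a)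
  rwa [preimage_const_add_Ioi, sub_self] at this

noncomputable def depolIntegrand (j : Fin 3) (l : Fin 3 → ℝ) (y : ℝ) : ℝ :=
  1 / ((l j ^ 2 + y) * √((l 0 ^ 2 + y) * (l 1 ^ 2 + y) * (l 2 ^ 2 + y)))

section

variable {c : Fin 3 → ℝ} {t : ℝ}

theorem prod_sq_add_pos (hc : ∀ i, 0 < c i) (ht : 0 ≤ t) :
    0 < (c 0 ^ 2 + t) * (c 1 ^ 2 + t) * (c 2 ^ 2 + t) := by
  have := hc 0; have := hc 1; have := hc 2
  positivity

variable (j : Fin 3)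

theorem depolIntegrand_pos (hc : ∀ i, 0 < c i) (ht : 0 ≤ t) : 0 < depolIntegrand j c t := by
  have := hc j
  have := prod_sq_add_pos hc ht
  unfold depolIntegrand
  positivity

theorem continuousOn_depolIntegrand (hc : ∀ i, 0 < c i) :
    ContinuousOn (depolIntegrand j c) (Ici 0) :=
  continuousOn_const.div (by fun_prop) fun _ ht => (one_div_pos.mp (depolIntegrand_pos j hc ht)).ne'

theorem depolIntegrand_le {m : ℝ} (hm : 0 < m) (hmc : ∀ i, m ≤ c i) (ht : 0 ≤ t) :
    depolIntegrand j c t ≤ (t + m ^ 2) ^ (-2 : ℝ) / m := by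
  have hle i : m ^ 2 + t ≤ c i ^ 2 + t := by gcongr; exact hmc i
  have hmt : 0 < m ^ 2 + t := by positivity
  have hprod : ((m ^ 2 + t) * m) ^ 2 ≤ (c 0 ^ 2 + t) * (c 1 ^ 2 + t) * (c 2 ^ 2 + t) := by
    have h2 : m ^ 2 ≤ c 2 ^ 2 + t := (le_add_of_nonneg_right ht).trans (hle 2)
    calc ((m ^ 2 + t) * m) ^ 2 = (m ^ 2 + t) * (m ^ 2 + t) * m ^ 2 := by ring
      _ ≤ _ := mul_le_mul (mul_le_mul (hle 0) (hle 1) hmt.le (hmt.trans_le (hle 0)).le)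
        h2 (by positivity) (mul_pos (hmt.trans_le (hle 0)) (hmt.trans_le (hle 1))).le
  have hden : (m ^ 2 + t) * ((m ^ 2 + t) * m) ≤
      (c j ^ 2 + t) * √((c 0 ^ 2 + t) * (c 1 ^ 2 + t) * (c 2 ^ 2 + t)) :=
    mul_le_mul (hle j) (Real.le_sqrt_of_sq_le hprod) (by positivity) (hmt.trans_le (hle j)).le
  have hrhs : (t + m ^ 2) ^ (-2 : ℝ) / m = 1 / ((m ^ 2 + t) * ((m ^ 2 + t) * m)) := by
    rw [rpow_neg (by positivity), rpow_two]
    field_simp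
    ring
  rw [hrhs]
  exact one_div_le_one_div_of_le (by positivity) hden

theorem integrableOn_depolIntegrand (hc : ∀ i, 0 < c i) {a : ℝ} (ha : 0 ≤ a) :
    IntegrableOn (depolIntegrand j c) (Ioi a) := by
  obtain ⟨m, hm, hmc⟩ : ∃ m, 0 < m ∧ ∀ i, m ≤ c i :=
    ⟨Finset.univ.inf' Finset.univ_nonempty c, (Finset.lt_inf'_iff _).2 fun i _ => hc i,
      fun i => Finset.inf'_le c (Finset.mem_univ i)⟩
  have hIoi : Ioi a ⊆ Ici 0 := fun t ht => ha.trans (le_of_lt ht)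
  refine Integrable.mono' ((integrableOn_add_rpow_Ioi_of_lt (a := -2) (by norm_num)
    (by have := sq_pos_of_pos hm; linarith : -m ^ 2 < a)).div_const m)
    (((continuousOn_depolIntegrand j hc).mono hIoi).aestronglyMeasurable measurableSet_Ioi) ?_
  filter_upwards [ae_restrict_mem measurableSet_Ioi] with t ht
  rw [Real.norm_of_nonneg (depolIntegrand_pos j hc (hIoi ht)).le]
  exact depolIntegrand_le j hm hmc (hIoi ht)

theorem intervalIntegral_depolIntegrand_pos (hc : ∀ i, 0 < c i) {a b : ℝ} (ha : 0 ≤ a)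
    (hab : a < b) : 0 < ∫ t in a..b, depolIntegrand j c t := by
  refine intervalIntegral.intervalIntegral_pos_of_pos_on ?_
    (fun t ht => depolIntegrand_pos j hc (ha.trans ht.1.le)) hab
  refine ((continuousOn_depolIntegrand j hc).mono ?_).intervalIntegrable
  rw [uIcc_of_le hab.le]
  exact fun t ht => ha.trans ht.1

end

theorem depol_eq_setIntegral_Ioi {c l : Fin 3 → ℝ} {ρ : ℝ} (hρ : ∀ i, 0 ≤ c i ^ 2 + ρ)
    (hl : ∀ i, l i = √(c i ^ 2 + ρ)) (j : Fin 3) :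
    depol j l = √((c 0 ^ 2 + ρ) * (c 1 ^ 2 + ρ) * (c 2 ^ 2 + ρ)) / 2 *
      ∫ t in Ioi ρ, depolIntegrand j c t := by
  have hsq i : l i ^ 2 = c i ^ 2 + ρ := by rw [hl, sq_sqrt (hρ i)]
  have hshift : depolIntegrand j l = fun y => depolIntegrand j c (ρ + y) := by
    ext y
    simp only [depolIntegrand, hsq, add_assoc]
  change l 0 * l 1 * l 2 / 2 * ∫ y in Ioi 0, depolIntegrand j l y = _
  rw [← setIntegral_Ioi_zero_comp_const_add (depolIntegrand j c) ρ, ← hshift, hl 0, hl 1, hl 2,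
    ← sqrt_mul (hρ 0), ← sqrt_mul (mul_nonneg (hρ 0) (hρ 1))]

/-- Positivity of `K`: fix positive `c₁, c₂, c₃` and `0 ≤ ρ_c < ρ_e`;
let `g(t) = √((c₁²+t)(c₂²+t)(c₃²+t))`, `θ₁ = g(ρ_c)/g(ρ_e)`, `l_{cj} = √(c_j²+ρ_c)`,
`l_{ej} = √(c_j²+ρ_e)`.  Then for each `j`, `d_j(l_c) − θ₁ d_j(l_e) > 0`; in particular
`K = d_{c1} − θ₁ d_{e1} > 0`. -/
theorem K_pos (c : Fin 3 → ℝ) (hc : ∀ j, 0 < c j)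
    (ρc ρe : ℝ) (hρc : 0 ≤ ρc) (hρ : ρc < ρe)
    (g : ℝ → ℝ) (hg : ∀ t, g t = Real.sqrt ((c 0 ^ 2 + t) * (c 1 ^ 2 + t) * (c 2 ^ 2 + t)))
    (θ₁ : ℝ) (hθ₁ : θ₁ = g ρc / g ρe)
    (lc le : Fin 3 → ℝ)
    (hlc : ∀ j, lc j = Real.sqrt (c j ^ 2 + ρc))
    (hle : ∀ j, le j = Real.sqrt (c j ^ 2 + ρe)) :
    ∀ j : Fin 3, depol j lc - θ₁ * depol j le > 0 := by
  intro j
  have hρe : 0 ≤ ρe := hρc.trans hρ.le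
  have hg_pos {t : ℝ} (ht : 0 ≤ t) : 0 < g t := by
    rw [hg]
    exact sqrt_pos.2 (prod_sq_add_pos hc ht)
  have hsum {t : ℝ} (ht : 0 ≤ t) i : 0 ≤ c i ^ 2 + t := by positivity
  rw [depol_eq_setIntegral_Ioi (hsum hρc) hlc, depol_eq_setIntegral_Ioi (hsum hρe) hle, ← hg,
    ← hg, hθ₁, ← mul_assoc, div_mul_div_cancel₀ (hg_pos hρe).ne', ← mul_sub,
    intervalIntegral.integral_Ioi_sub_Ioi (integrableOn_depolIntegrand j hc hρc) hρ.le]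
  exact mul_pos (half_pos (hg_pos hρc)) (intervalIntegral_depolIntegrand_pos j hc hρc hρ)
end
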